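/- Let W be a stochastic matrix whose associated directed graph is strongly connected and aperiodic (i.e., W is primitive). Then every solution x(k) of x(k+1) ≤ W·x(k) (entrywise) that is bounded from below converges to c·𝟙 for some c ∈ ℝ. -/

import Mathlib

/-! The maximum `M k` of `x k` is nonincreasing, because a stochastic matrix averages, and
bounded below, so it converges to some `c`. With `A = W ^ d` entrywise positive we have
`x (k + d) ≤ A x (k)`, and averaging with a positive weight on coordinate `i` gives
`δ (M k - x k i) ≤ M k - M (k + d)` for some `δ > 0`. The right side tends to `0`, so every
coordinate is squeezed between `M k - (M k - M (k + d)) / δ` and `M k`, both tending to `c`. -/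

open Matrix Finset Filter Topology

def Stochastic {n : ℕ} (W : Matrix (Fin n) (Fin n) ℝ) : Prop :=
  (∀ i j, 0 ≤ W i j) ∧ ∀ i, ∑ j, W i j = 1

noncomputable def vmax {n : ℕ} (hn : 0 < n) (x : Fin n → ℝ) : ℝ :=
  Finset.univ.sup' ⟨⟨0, hn⟩, Finset.mem_univ _⟩ x

noncomputable def vmin {n : ℕ} (hn : 0 < n) (x : Fin n → ℝ) : ℝ :=
  Finset.univ.inf' ⟨⟨0, hn⟩, Finset.mem_univ _⟩ x

def Phi {n : ℕ} (W : ℕ → Matrix (Fin n) (Fin n) ℝ) (k : ℕ) : ℕ → Matrix (Fin n) (Fin n) ℝ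
  | 0 => 1
  | j + 1 => W (k + j) * Phi W k j

section RowStochastic

variable {R ι : Type*} [CommRing R] [PartialOrder R] [IsOrderedRing R] [Fintype ι]
  [DecidableEq ι] {A : Matrix ι ι R}

theorem mulVec_mono_of_mem_rowStochastic (hA : A ∈ rowStochastic R ι) : Monotone A.mulVec := by
  intro u v huv
  have h := nonneg_mulVec_of_mem_rowStochastic hA (x := v - u) fun i => sub_nonneg.2 (huv i)
  rw [mulVec_sub] at h
  exact fun i => sub_nonneg.1 (h i)

theorem mulVec_le_sub_mul_of_mem_rowStochastic (hA : A ∈ rowStochastic R ι) {v : ι → R} {a : R}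
    (hv : ∀ l, v l ≤ a) (i j : ι) : (A *ᵥ v) j ≤ a - A j i * (a - v i) := by
  have hgap : (A *ᵥ v) j = a - ∑ l, A j l * (a - v l) := by
    simp only [mulVec, dotProduct, mul_sub, sum_sub_distrib, ← sum_mul,
      sum_row_of_mem_rowStochastic hA j, one_mul, sub_sub_cancel]
  have hi : A j i * (a - v i) ≤ ∑ l, A j l * (a - v l) :=
    single_le_sum (f := fun l => A j l * (a - v l))
      (fun l _ => mul_nonneg (hA.1 j l) (sub_nonneg.2 (hv l))) (mem_univ i)
  rw [hgap]
  exact sub_le_sub_left hi a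

theorem mulVec_le_of_mem_rowStochastic (hA : A ∈ rowStochastic R ι) {v : ι → R} {a : R}
    (hv : ∀ l, v l ≤ a) (j : ι) : (A *ᵥ v) j ≤ a :=
  (mulVec_le_sub_mul_of_mem_rowStochastic hA hv j j).trans
    (sub_le_self _ (mul_nonneg (hA.1 j j) (sub_nonneg.2 (hv j))))

theorem le_pow_mulVec_of_le_mulVec (hA : A ∈ rowStochastic R ι) {x : ℕ → ι → R}
    (hx : ∀ k, x (k + 1) ≤ A *ᵥ x k) (m k : ℕ) : x (k + m) ≤ (A ^ m) *ᵥ x k := by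
  induction m with
  | zero => simp
  | succ m ih =>
    calc x (k + m + 1) ≤ A *ᵥ x (k + m) := hx (k + m)
      _ ≤ A *ᵥ ((A ^ m) *ᵥ x k) := mulVec_mono_of_mem_rowStochastic hA ih
      _ = (A ^ (m + 1)) *ᵥ x k := by rw [mulVec_mulVec, ← pow_succ']

end RowStochastic

section vmax

variable {n : ℕ} (hn : 0 < n)

theorem le_vmax (v : Fin n → ℝ) (i : Fin n) : v i ≤ vmax hn v :=
  le_sup' v (mem_univ i)

theorem vmax_le {v : Fin n → ℝ} {a : ℝ} (hv : ∀ i, v i ≤ a) : vmax hn v ≤ a :=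
  sup'_le _ _ fun i _ => hv i

variable {A : Matrix (Fin n) (Fin n) ℝ} {u v : Fin n → ℝ}

theorem vmax_le_of_le_mulVec (hA : A ∈ rowStochastic ℝ (Fin n)) (huv : u ≤ A *ᵥ v) :
    vmax hn u ≤ vmax hn v :=
  vmax_le hn fun j => (huv j).trans (mulVec_le_of_mem_rowStochastic hA (le_vmax hn v) j)

theorem mul_sub_le_vmax_sub_vmax_of_le_mulVec (hA : A ∈ rowStochastic ℝ (Fin n)) {i : Fin n}
    {δ : ℝ} (hδ : ∀ j, δ ≤ A j i) (huv : u ≤ A *ᵥ v) :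
    δ * (vmax hn v - v i) ≤ vmax hn v - vmax hn u := by
  have hu : vmax hn u ≤ vmax hn v - δ * (vmax hn v - v i) := by
    refine vmax_le hn fun j => (huv j).trans ?_
    calc (A *ᵥ v) j ≤ vmax hn v - A j i * (vmax hn v - v i) :=
          mulVec_le_sub_mul_of_mem_rowStochastic hA (le_vmax hn v) i j
      _ ≤ vmax hn v - δ * (vmax hn v - v i) := by
          gcongr
          · exact sub_nonneg.2 (le_vmax hn v i)
          · exact hδ j
  linarith

end vmax

theorem tendsto_of_le_of_mul_sub_le_sub_add {M y : ℕ → ℝ} {c δ : ℝ} (d : ℕ) (hδ : 0 < δ)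
    (hM : Tendsto M atTop (𝓝 c)) (hyM : ∀ k, y k ≤ M k)
    (hgap : ∀ k, δ * (M k - y k) ≤ M k - M (k + d)) : Tendsto y atTop (𝓝 c) := by
  have hlow : Tendsto (fun k => M k - (M k - M (k + d)) / δ) atTop (𝓝 c) := by
    simpa using hM.sub ((hM.sub (hM.comp (tendsto_add_atTop_nat d))).div_const δ)
  refine tendsto_of_tendsto_of_tendsto_of_le_of_le hlow hM (fun k => ?_) hyM
  have hk : M k - y k ≤ (M k - M (k + d)) / δ := (le_div_iff₀' hδ).2 (hgap k)
  dsimp only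
  linarith

theorem stmt13 {n : ℕ} (W : Matrix (Fin n) (Fin n) ℝ) (hW : Stochastic W)
    (hprim : ∃ d ≥ 1, ∀ i j, 0 < (W ^ d) i j)
    (x : ℕ → Fin n → ℝ) (hx : ∀ k, x (k + 1) ≤ W.mulVec (x k))
    (hbdd : ∃ c, ∀ k i, c ≤ x k i) :
    ∃ c : ℝ, Tendsto (fun k => x k) atTop (𝓝 fun _ => c) := by
  rcases n.eq_zero_or_pos with rfl | hn
  · exact ⟨0, tendsto_pi_nhds.2 fun i => i.elim0⟩
  have hW' : W ∈ rowStochastic ℝ (Fin n) := mem_rowStochastic_iff_sum.2 hW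
  obtain ⟨d, -, hpos⟩ := hprim
  obtain ⟨b, hb⟩ := hbdd
  set M : ℕ → ℝ := fun k => vmax hn (x k)
  have hM : Antitone M := antitone_nat_of_succ_le fun k => vmax_le_of_le_mulVec hn hW' (hx k)
  have hMb : BddBelow (Set.range M) := by
    refine ⟨b, ?_⟩
    rintro _ ⟨k, rfl⟩
    exact (hb k _).trans (le_vmax hn _ ⟨0, hn⟩)
  refine ⟨⨅ k, M k, tendsto_pi_nhds.2 fun i => ?_⟩
  have : Nonempty (Fin n) := ⟨i⟩
  obtain ⟨j₀, hj₀⟩ := Finite.exists_min fun j => (W ^ d) j i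
  refine tendsto_of_le_of_mul_sub_le_sub_add d (hpos j₀ i) (tendsto_atTop_ciInf hM hMb)
    (fun k => le_vmax hn _ i) fun k => ?_
  exact mul_sub_le_vmax_sub_vmax_of_le_mulVec hn (pow_mem hW' d) hj₀
    (le_pow_mulVec_of_le_mulVec hW' hx d k)
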